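/- In the transformed Prisoner's Dilemma, the profile (D,D) is a pure-strategy Nash equilibrium of the subjective game if and only if a(P−S) − b(T−P) ≥ 0, which (since a > 0 and T > P) holds if and only if w ≤ w_max, where w = b/a and w_max = (P−S)/(T−P). -/

import Mathlib

/-- Pure strategies in the Prisoner's Dilemma. -/
inductive Strategy : Type
  | C : Strategy
  | D : Strategy
deriving DecidableEq

open Strategy

/-- Objective payoff of the row player when she plays `s` against `t`:
`R` at (C,C), `P` at (D,D), `S` for the cooperator and `T` for the defector
at an asymmetric profile. -/
def payoff (T R P S : ℝ) : Strategy → Strategy → ℝ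
  | C, C => R
  | C, D => S
  | D, C => T
  | D, D => P

/-- Subjective utility of a player who plays `s` against `t`:
`u'_i = a·u_i + b·u_j`. -/
def subj (T R P S a b : ℝ) (s t : Strategy) : ℝ :=
  a * payoff T R P S s t + b * payoff T R P S t s

/-- `(s, t)` is a pure-strategy Nash equilibrium of the subjective game:
no player can strictly increase her subjective utility by a unilateral deviation. -/
def IsNash (T R P S a b : ℝ) (s t : Strategy) : Prop :=
  (∀ s' : Strategy, subj T R P S a b s' t ≤ subj T R P S a b s t) ∧
  (∀ t' : Strategy, subj T R P S a b t' s ≤ subj T R P S a b t s)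

theorem isNash_self_iff {T R P S a b : ℝ} {s : Strategy} :
    IsNash T R P S a b s s ↔ ∀ s', subj T R P S a b s' s ≤ subj T R P S a b s s :=
  and_self_iff

/- Deviating from (D,D) to C costs the deviator `a (P - S)` and gives the other player
`T - P`, which is worth `b (T - P)` to the deviator. -/
theorem isNash_D_D_iff {T R P S a b : ℝ} :
    IsNash T R P S a b D D ↔ b * (T - P) ≤ a * (P - S) := by
  rw [isNash_self_iff]
  refine ⟨fun h => ?_, fun h s' => ?_⟩
  · have hC := h C
    simp only [subj, payoff] at hC
    linarith
  · cases s' <;> simp only [subj, payoff] <;> linarith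

theorem dd_nash_iff_general (T R P S a b : ℝ)
    (hTR : T > R) (hRP : R > P)
    (ha : a > 0) :
    (IsNash T R P S a b Strategy.D Strategy.D ↔ a * (P - S) - b * (T - P) ≥ 0) ∧
    (IsNash T R P S a b Strategy.D Strategy.D ↔ b / a ≤ (P - S) / (T - P)) := by
  have hTP : 0 < T - P := by linarith
  refine ⟨isNash_D_D_iff.trans sub_nonneg.symm, isNash_D_D_iff.trans ?_⟩
  rw [div_le_div_iff₀ ha hTP, mul_comm (P - S)]

/-- (D,D) is a Nash equilibrium of the subjective game iff
`a(P−S) − b(T−P) ≥ 0`, which (since `a > 0` and `T > P`) holds iff `w ≤ w_max`,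
where `w = b/a` and `w_max = (P−S)/(T−P)`. -/
theorem dd_nash_iff (T R P S a b : ℝ)
    (hTR : T > R) (hRP : R > P) (hPS : P > S)
    (ha : a > 0) (hb : b ≥ 0) :
    (IsNash T R P S a b Strategy.D Strategy.D ↔ a * (P - S) - b * (T - P) ≥ 0) ∧
    (IsNash T R P S a b Strategy.D Strategy.D ↔ b / a ≤ (P - S) / (T - P)) :=
  dd_nash_iff_general T R P S a b hTR hRP ha
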